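/- Let C ⊆ ℝ be a closed set that is linearly independent over ℚ, and let P ⊆ C be a coanalytic set (i.e., ℝ \ P is analytic). Then the additive subgroup of (ℝ, +) generated by P is coanalytic, i.e., its complement in ℝ is analytic. -/

import Mathlib

/-!
Over a `ℚ`-independent (hence `ℤ`-independent) set `C`, every element of `⟨C⟩` has a unique
reduced representation `∑ nᵢ cᵢ` with `c₁ < ⋯ < cₖ` in `C` and all `nᵢ ≠ 0`, and it lies in
`⟨P⟩` exactly when all the `cᵢ` lie in `P`. Hence `⟨C⟩` is a countable union of injective
continuous images of Borel sets, so Borel by Lusin–Souslin, and `⟨P⟩ᶜ` is the union of the Borel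
set `⟨C⟩ᶜ` with the continuous images of the analytic sets of reduced representations having some
`cᵢ ∉ P`.
-/

open MeasureTheory Set Function

theorem MeasureTheory.AnalyticSet.union {α : Type*} [TopologicalSpace α] {s t : Set α}
    (hs : AnalyticSet s) (ht : AnalyticSet t) : AnalyticSet (s ∪ t) := by
  rw [union_eq_iUnion]
  exact .iUnion fun b => by cases b <;> assumption

theorem MeasureTheory.AnalyticSet.inter {α : Type*} [TopologicalSpace α] [T2Space α]
    {s t : Set α} (hs : AnalyticSet s) (ht : AnalyticSet t) : AnalyticSet (s ∩ t) := by
  rw [inter_eq_iInter]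
  exact .iInter fun b => by cases b <;> assumption

section Representations

variable {M : Type*}

def reducedReprs [Preorder M] (S : Set M) (k : ℕ) : Set ((Fin k → M) × (Fin k → ℤ)) :=
  {p | (∀ i, p.1 i ∈ S) ∧ StrictMono p.1 ∧ ∀ i, p.2 i ≠ 0}

theorem measurableSet_reducedReprs [TopologicalSpace M] [LinearOrder M] [OrderClosedTopology M]
    [SecondCountableTopology M] [MeasurableSpace M] [OpensMeasurableSpace M] {S : Set M}
    (hS : MeasurableSet S) (k : ℕ) : MeasurableSet (reducedReprs S k) := by
  unfold reducedReprs StrictMono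
  refine Measurable.setOf (.and (.forall fun i => hS.mem.comp (by fun_prop))
    (.and (.forall fun i => .forall fun j => .imp measurable_const ?_) (.forall fun i => ?_)))
  · exact (measurableSet_lt (by fun_prop) (by fun_prop)).mem
  · exact (measurableSet_singleton (0 : ℤ)).compl.mem.comp (by fun_prop)

variable [AddCommGroup M]

def zsumMap (k : ℕ) (p : (Fin k → M) × (Fin k → ℤ)) : M :=
  ∑ i, p.2 i • p.1 i

theorem continuous_zsumMap [TopologicalSpace M] [IsTopologicalAddGroup M]
    (k : ℕ) : Continuous (zsumMap (M := M) k) := by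
  unfold zsumMap
  fun_prop

theorem zsumMap_mem_closure {S : Set M} {k : ℕ} {p : (Fin k → M) × (Fin k → ℤ)}
    (hp : ∀ i, p.1 i ∈ S) : zsumMap k p ∈ AddSubgroup.closure S :=
  sum_mem fun i _ => zsmul_mem (AddSubgroup.subset_closure (hp i)) _

theorem exists_mem_reducedReprs_of_mem_closure [LinearOrder M] {S : Set M} {x : M}
    (hx : x ∈ AddSubgroup.closure S) : ∃ k, ∃ p ∈ reducedReprs S k, zsumMap k p = x := by
  rw [← Submodule.span_int_eq_addSubgroupClosure, Submodule.mem_toAddSubgroup,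
    Submodule.mem_span_set] at hx
  obtain ⟨f, hsupp, rfl⟩ := hx
  let e := f.support.orderIsoOfFin rfl
  refine ⟨_, (fun i => e i, fun i => f (e i)),
    ⟨fun i => hsupp (e i).2, fun _ _ h => e.strictMono h,
      fun i => Finsupp.mem_support_iff.1 (e i).2⟩, ?_⟩
  rw [zsumMap, Finsupp.sum, ← Finset.sum_coe_sort f.support]
  exact Equiv.sum_comp e.toEquiv (fun a : f.support => f a • (a : M))

theorem addSubgroupClosure_eq_iUnion_image_reducedReprs [LinearOrder M] (S : Set M) :
    (AddSubgroup.closure S : Set M) = ⋃ k, zsumMap k '' reducedReprs S k := by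
  refine Subset.antisymm (fun x hx => ?_) (iUnion_subset fun k => ?_)
  · obtain ⟨k, p, hp, rfl⟩ := exists_mem_reducedReprs_of_mem_closure hx
    exact mem_iUnion.2 ⟨k, p, hp, rfl⟩
  · rintro _ ⟨p, hp, rfl⟩
    exact zsumMap_mem_closure hp.1

theorem mem_of_zsumMap_mem_closure {C S : Set M} (hind : LinearIndependent ℤ ((↑) : C → M))
    (hSC : S ⊆ C) {k : ℕ} {c : Fin k → M} {n : Fin k → ℤ} (hc : ∀ i, c i ∈ C)
    (hinj : Injective c) (hn : ∀ i, n i ≠ 0) (hS : zsumMap k (c, n) ∈ AddSubgroup.closure S)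
    (i : Fin k) : c i ∈ S := by
  let c' : Fin k → C := fun i => ⟨c i, hc i⟩
  have hc' : Injective c' := fun i j h => hinj congr($h.1)
  let f : C →₀ ℤ := (Finsupp.equivFunOnFinite.symm n).mapDomain c'
  have hSC' : S = (↑) '' ((↑) ⁻¹' S : Set C) := by
    rw [Subtype.image_preimage_coe, inter_eq_right.2 hSC]
  rw [← Submodule.span_int_eq_addSubgroupClosure, Submodule.mem_toAddSubgroup, hSC',
    Finsupp.mem_span_image_iff_linearCombination] at hS
  obtain ⟨l, hl, hlf⟩ := hS
  have hfl : f = l := by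
    apply hind
    rw [hlf, Finsupp.linearCombination_mapDomain]
    simp [zsumMap, Finsupp.linearCombination_apply, Finsupp.sum_fintype, c']
  have : f (c' i) ≠ 0 := by simpa [f, Finsupp.mapDomain_apply hc'] using hn i
  rw [hfl] at this
  exact hl (Finsupp.mem_support_iff.2 this)

theorem range_subset_range_of_zsumMap_eq {C : Set M} (hind : LinearIndependent ℤ ((↑) : C → M))
    {k l : ℕ} {c : Fin k → M} {n : Fin k → ℤ} {d : Fin l → M} {m : Fin l → ℤ}
    (hc : ∀ i, c i ∈ C) (hinj : Injective c) (hn : ∀ i, n i ≠ 0) (hd : ∀ j, d j ∈ C)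
    (h : zsumMap k (c, n) = zsumMap l (d, m)) : range c ⊆ range d := by
  rintro _ ⟨i, rfl⟩
  refine mem_of_zsumMap_mem_closure hind (range_subset_iff.2 hd) hc hinj hn ?_ i
  exact h ▸ zsumMap_mem_closure fun j => mem_range_self j

theorem injOn_zsumMap_reducedReprs [LinearOrder M] {C : Set M}
    (hind : LinearIndependent ℤ ((↑) : C → M)) (k : ℕ) :
    InjOn (zsumMap k) (reducedReprs C k) := by
  rintro ⟨c, n⟩ ⟨hc, hcmono, hn⟩ ⟨d, m⟩ ⟨hd, hdmono, hm⟩ hsum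
  obtain rfl : c = d := (hcmono.range_inj hdmono).1 <|
    (range_subset_range_of_zsumMap_eq hind hc hcmono.injective hn hd hsum).antisymm
      (range_subset_range_of_zsumMap_eq hind hd hdmono.injective hm hc hsum.symm)
  have hlin : LinearIndependent ℤ c :=
    hind.comp (fun i => ⟨c i, hc i⟩) fun i j h => hcmono.injective congr($h.1)
  rw [Fintype.linearIndependent_iffₛ.1 hlin n m hsum |> funext]

theorem compl_addSubgroupClosure_eq [LinearOrder M] {C S : Set M}
    (hind : LinearIndependent ℤ ((↑) : C → M)) (hSC : S ⊆ C) :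
    (AddSubgroup.closure S : Set M)ᶜ = (AddSubgroup.closure C : Set M)ᶜ ∪
      ⋃ k, zsumMap k '' (reducedReprs C k ∩ ⋃ i, (fun p => p.1 i) ⁻¹' Sᶜ) := by
  refine Subset.antisymm (fun x hxS => ?_) (union_subset ?_ (iUnion_subset fun k => ?_))
  · by_cases hxC : x ∈ AddSubgroup.closure C
    · obtain ⟨k, p, hp, rfl⟩ := exists_mem_reducedReprs_of_mem_closure hxC
      have : ∃ i, p.1 i ∉ S := by
        by_contra! hpS
        exact hxS (zsumMap_mem_closure hpS)
      exact Or.inr <| mem_iUnion.2 ⟨k, p, ⟨hp, mem_iUnion.2 this⟩, rfl⟩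
    · exact Or.inl hxC
  · exact compl_subset_compl.2 (AddSubgroup.closure_mono hSC)
  · rintro _ ⟨⟨c, n⟩, ⟨⟨hc, hcmono, hn⟩, hcS⟩, rfl⟩ hxS
    obtain ⟨i, hi⟩ := mem_iUnion.1 hcS
    exact hi (mem_of_zsumMap_mem_closure hind hSC hc hcmono.injective hn hxS i)

end Representations

theorem measurableSet_addSubgroupClosure_of_linearIndependent {C : Set ℝ} (hC : MeasurableSet C)
    (hind : LinearIndependent ℤ ((↑) : C → ℝ)) : MeasurableSet (AddSubgroup.closure C : Set ℝ) := by
  rw [addSubgroupClosure_eq_iUnion_image_reducedReprs]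
  exact .iUnion fun k => (measurableSet_reducedReprs hC k).image_of_continuousOn_injOn
    (continuous_zsumMap k).continuousOn (injOn_zsumMap_reducedReprs hind k)

/-- If `C ⊆ ℝ` is closed and linearly independent over `ℚ` and `P ⊆ C` is
coanalytic, then the additive subgroup of `ℝ` generated by `P` is coanalytic. -/
theorem analyticSet_compl_addSubgroup_closure_of_coanalytic
    (C : Set ℝ) (hC : IsClosed C)
    (hind : LinearIndependent ℚ ((↑) : C → ℝ))
    (P : Set ℝ) (hPC : P ⊆ C) (hP : AnalyticSet Pᶜ) :
    AnalyticSet (((AddSubgroup.closure P : AddSubgroup ℝ) : Set ℝ)ᶜ) := by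
  have hindℤ := hind.restrict_scalars' ℤ
  rw [compl_addSubgroupClosure_eq hindℤ hPC]
  refine (measurableSet_addSubgroupClosure_of_linearIndependent hC.measurableSet hindℤ).compl
    |>.analyticSet.union <| .iUnion fun k => .image_of_continuous ?_ (continuous_zsumMap k)
  exact (measurableSet_reducedReprs hC.measurableSet k).analyticSet.inter <|
    .iUnion fun i => hP.preimage (by fun_prop)
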